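/- arXiv:2506.19675 — 3 statements merged into one kernel-verified Lean document; each statement's English description precedes it below -/
import Mathlib

section
/- For any finite group G and any divisor k of |G|, the cardinality of the set L_k(G) = {x ∈ G : x^k = 1} is divisible by k. -/
/-!
Fix a prime `p` and write `k = p ^ α * b` with `p ∤ b`. By Bezout, every `x` with `x ^ k = 1`
factors uniquely as `x = y * u` with `y ^ b = 1`, `u ^ p ^ α = 1` and `u` in the centralizer
`C(y)`, so `|L_k(G)| = ∑_{y ∈ L_b(G)} |L_{p ^ α}(C(y))|`. The summand is a class function, and
grouping each conjugacy class gives terms `|G : C| * |L_{p ^ α}(C)|` with `C = C(y)`. These are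
divisible by `p ^ α` once Frobenius' theorem is known for powers of `p` in `C`: with
`p ^ c = gcd(p ^ α, |C|)` we have `L_{p ^ α}(C) = L_{p ^ c}(C)` and `p ^ α ∣ |G : C| * p ^ c`.

For powers of `p` we induct on `|G|`. If `p ^ s` is the full `p`-part of `|G|`, the same identity
with `k = |G|` reads `|G| = t * |L_{p ^ s}(G)| + (a multiple of p ^ s)`, where `t = |L_b(Z(G))|`
counts the central `y` and is prime to `p` by Cauchy. Smaller powers `p ^ a` follow by downward
induction: the elements of order `p ^ (a + 1)` come in blocks of `φ(p ^ (a + 1)) = p ^ a * (p - 1)`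
generators of the same cyclic subgroup.
-/

open Finset Subgroup

theorem Nat.card_subtype_prod_eq_sum {α β : Type*} [Fintype α] [Fintype β] (P : α → Prop)
    [DecidablePred P] (Q : α → β → Prop) :
    Nat.card {q : α × β // P q.1 ∧ Q q.1 q.2} = ∑ a ∈ {a | P a}, Nat.card {b // Q a b} := by
  classical
  simp only [Nat.card_eq_fintype_card, Fintype.card_subtype, Finset.card_filter,
    Fintype.sum_prod_type, Finset.sum_filter, ite_and, Finset.sum_ite_irrel,
    Finset.sum_const_zero]

theorem MulAction.dvd_sum_of_dvd_index_stabilizer_mul {H X : Type*} [Group H] [MulAction H X]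
    [Fintype X] {D : ℕ} {f : X → ℕ} (hf : ∀ (h : H) x, f (h • x) = f x)
    (hD : ∀ x, D ∣ (stabilizer H x).index * f x) : D ∣ ∑ x, f x := by
  classical
  rw [← (selfEquivSigmaOrbits H X).symm.sum_comp, Fintype.sum_sigma]
  refine Finset.dvd_sum fun ω _ => ?_
  have orbit_const (z : orbit H ω.out) :
      f ((selfEquivSigmaOrbits H X).symm ⟨ω, z⟩) = f ω.out := by
    obtain ⟨_, h, rfl⟩ := z
    exact hf h _
  rw [Finset.sum_congr rfl fun z _ => orbit_const z, sum_const, card_univ, smul_eq_mul,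
    ← Nat.card_eq_fintype_card, Nat.card_coe_set_eq, ← index_stabilizer]
  exact hD _

section

variable {G : Type*} [Group G]

theorem Subgroup.Characteristic.map_mem_iff {H : Subgroup G} [hH : H.Characteristic]
    (φ : G ≃* G) {y : G} : φ y ∈ H ↔ y ∈ H :=
  SetLike.ext_iff.mp (hH.fixed φ) y

theorem card_centralizer_lt_of_notMem_center [Finite G] {y : G} (hy : y ∉ center G) :
    Nat.card (centralizer {y}) < Nat.card G := by
  refine lt_of_le_of_ne (card_le_card_group _) fun h => hy ?_
  rwa [card_eq_iff_eq_top, centralizer_eq_top_iff_subset, Set.singleton_subset_iff] at h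

theorem index_stabilizer_conjAct (y : G) :
    (MulAction.stabilizer (ConjAct G) y).index = (centralizer {y}).index := by
  rw [centralizer_eq_comap_stabilizer]
  exact (index_comap_of_surjective _ (ConjAct.toConjAct (G := G)).surjective).symm

theorem dvd_sum_filter_of_dvd_index_centralizer_mul [Fintype G] {P : G → Prop}
    [DecidablePred P] {f : G → ℕ} {D : ℕ} (hP : ∀ g y, P (MulAut.conj g y) ↔ P y)
    (hf : ∀ g y, f (MulAut.conj g y) = f y) (hD : ∀ y, P y → D ∣ (centralizer {y}).index * f y) :
    D ∣ ∑ y ∈ {y | P y}, f y := by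
  rw [Finset.sum_filter]
  refine MulAction.dvd_sum_of_dvd_index_stabilizer_mul (H := ConjAct G) (fun g y => ?_)
    fun y => ?_
  · simp only [ConjAct.smul_def, ← MulAut.conj_apply, hP, hf]
  · rw [index_stabilizer_conjAct]
    split_ifs with hy
    exacts [hD y hy, dvd_mul_of_dvd_right (dvd_zero D) _]

theorem Subgroup.card_pow_eq_one_eq_card_mem (H : Subgroup G) (n : ℕ) :
    Nat.card {u : H // u ^ n = 1} = Nat.card {u : G // u ∈ H ∧ u ^ n = 1} :=
  Nat.card_congr <| (Equiv.subtypeEquivRight fun u => by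
    rw [← H.subtype_injective.eq_iff, map_pow, map_one]; rfl).trans
    (Equiv.subtypeSubtypeEquivSubtypeInter (· ∈ H) (· ^ n = 1))

theorem card_centralizer_pow_eq_one (y : G) (n : ℕ) :
    Nat.card {u : centralizer {y} // u ^ n = 1} =
      Nat.card {u : G // Commute u y ∧ u ^ n = 1} := by
  rw [card_pow_eq_one_eq_card_mem]
  exact Nat.card_congr (Equiv.subtypeEquivRight fun u => by rw [mem_centralizer_singleton_iff]; rfl)

theorem card_centralizer_pow_eq_one_of_mem_center {y : G} (hy : y ∈ center G) (n : ℕ) :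
    Nat.card {u : centralizer {y} // u ^ n = 1} = Nat.card {x : G // x ^ n = 1} := by
  rw [card_centralizer_pow_eq_one]
  exact Nat.card_congr (Equiv.subtypeEquivRight fun u => and_iff_right (mem_center_iff.mp hy u))

theorem card_centralizer_map_pow_eq_one (φ : G ≃* G) (y : G) (n : ℕ) :
    Nat.card {u : centralizer {φ y} // u ^ n = 1} =
      Nat.card {u : centralizer {y} // u ^ n = 1} := by
  rw [card_centralizer_pow_eq_one, card_centralizer_pow_eq_one]
  refine (Nat.card_congr (φ.toEquiv.subtypeEquiv fun u => ?_)).symm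
  simp only [MulEquiv.toEquiv_eq_coe, EquivLike.coe_coe, ← map_pow, MulEquiv.map_eq_one_iff,
    Commute, SemiconjBy, ← map_mul, φ.injective.eq_iff]

theorem card_pow_mul_eq_one_eq_card_commute_pairs {a b : ℕ} (hab : a.Coprime b) :
    Nat.card {x : G // x ^ (a * b) = 1} =
      Nat.card {q : G × G // q.1 ^ b = 1 ∧ Commute q.2 q.1 ∧ q.2 ^ a = 1} := by
  obtain ⟨s, t, hst⟩ := Nat.isCoprime_iff_coprime.mpr hab
  have split (x : G) : x ^ (s * a) * x ^ (t * b) = x := by rw [← zpow_add, hst, zpow_one]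
  have pow_eq_one {x : G} {n : ℕ} (k : ℤ) (hx : x ^ n = 1) : x ^ (k * n) = 1 := by
    rw [zpow_mul', zpow_natCast, hx, one_zpow]
  refine Nat.card_congr
    { toFun x := ⟨(x ^ (s * a), x ^ (t * b)), ?_, ?_, ?_⟩
      invFun q := ⟨q.1.1 * q.1.2, ?_⟩
      left_inv x := Subtype.ext (split x)
      right_inv := ?_ }
  · rw [← zpow_natCast, ← zpow_mul, mul_assoc, ← Nat.cast_mul]
    exact pow_eq_one s x.2
  · exact (Commute.refl x.1).zpow_zpow _ _
  · rw [← zpow_natCast, ← zpow_mul, mul_assoc, ← Nat.cast_mul, mul_comm b]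
    exact pow_eq_one t x.2
  · obtain ⟨⟨y, u⟩, hy, huy, hu⟩ := q
    dsimp only at hy huy hu ⊢
    rw [huy.symm.mul_pow, pow_mul' y, hy, one_pow, one_mul, pow_mul u, hu, one_pow]
  · rintro ⟨⟨y, u⟩, hy, huy, hu⟩
    have hy' : y ^ (s * a) = y := by simpa [pow_eq_one t hy] using split y
    have hu' : u ^ (t * b) = u := by simpa [pow_eq_one s hu] using split u
    ext <;> simp [huy.symm.mul_zpow, hy', hu', pow_eq_one s hu, pow_eq_one t hy]

theorem card_pow_mul_eq_one_eq_sum [Fintype G] [DecidableEq G] {a b : ℕ} (hab : a.Coprime b) :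
    Nat.card {x : G // x ^ (a * b) = 1} =
      ∑ y ∈ {y : G | y ^ b = 1}, Nat.card {u : centralizer {y} // u ^ a = 1} := by
  simp only [card_pow_mul_eq_one_eq_card_commute_pairs hab, card_centralizer_pow_eq_one]
  exact Nat.card_subtype_prod_eq_sum (· ^ b = 1) fun y u => Commute u y ∧ u ^ a = 1

theorem card_pow_eq_one_eq_card_pow_gcd_eq_one [Finite G] (n : ℕ) :
    Nat.card {x : G // x ^ n = 1} = Nat.card {x : G // x ^ n.gcd (Nat.card G) = 1} := by
  refine Nat.card_congr (Equiv.subtypeEquivRight fun x => ?_)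
  simp only [← orderOf_dvd_iff_pow_eq_one, Nat.dvd_gcd_iff, _root_.orderOf_dvd_natCard, and_true]

theorem pow_dvd_index_mul_card_pow_eq_one [Finite G] {p α : ℕ} (hp : p.Prime) {H : Subgroup G}
    (hα : p ^ α ∣ Nat.card G)
    (hH : ∀ a, p ^ a ∣ Nat.card H → p ^ a ∣ Nat.card {u : H // u ^ p ^ a = 1}) :
    p ^ α ∣ H.index * Nat.card {u : H // u ^ p ^ α = 1} := by
  obtain ⟨c, -, hc⟩ := (Nat.dvd_prime_pow hp).mp (Nat.gcd_dvd_left (p ^ α) (Nat.card H))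
  have h_gcd : p ^ α ∣ H.index * (p ^ α).gcd (Nat.card H) := by
    rw [← Nat.gcd_mul_left, H.index_mul_card]
    exact Nat.dvd_gcd (dvd_mul_left _ _) hα
  have h_sub := hH c (hc ▸ Nat.gcd_dvd_right _ _)
  rw [card_pow_eq_one_eq_card_pow_gcd_eq_one, hc]
  exact (hc ▸ h_gcd).trans (mul_dvd_mul_left _ h_sub)

theorem card_zpowers_eq_zpowers_eq_totient [Finite G] (x₀ : G) :
    Nat.card {x : G // zpowers x = zpowers x₀} = (orderOf x₀).totient := by
  classical
  have : Fintype G := Fintype.ofFinite G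
  have generators : Nat.card {x : G // zpowers x = zpowers x₀} =
      Nat.card {h : zpowers x₀ // orderOf h = orderOf x₀} := Nat.card_congr
    { toFun x := ⟨⟨x, x.2.le (mem_zpowers _)⟩,
        by rw [orderOf_mk, ← Nat.card_zpowers, x.2, Nat.card_zpowers]⟩
      invFun h := ⟨h.1, eq_of_le_of_card_ge (zpowers_le.mpr h.1.2)
        (by rw [Nat.card_zpowers, Nat.card_zpowers, orderOf_coe, h.2])⟩
      left_inv _ := rfl
      right_inv _ := rfl }
  rw [generators, Nat.card_eq_fintype_card, Fintype.card_subtype,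
    IsCyclic.card_orderOf_eq_totient (by rw [← Nat.card_eq_fintype_card, Nat.card_zpowers])]

theorem totient_dvd_card_orderOf_eq [Finite G] (n : ℕ) :
    n.totient ∣ Nat.card {x : G // orderOf x = n} := by
  classical
  have : Fintype G := Fintype.ofFinite G
  rw [Nat.card_eq_fintype_card, Fintype.card_subtype, card_eq_sum_card_image (zpowers ·)]
  refine dvd_sum fun H hH => ?_
  obtain ⟨x₀, hx₀, rfl⟩ := mem_image.mp hH
  have fiber : ({x | orderOf x = n} : Finset G).filter (zpowers · = zpowers x₀) =
      ({x | zpowers x = zpowers x₀} : Finset G) := by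
    ext x
    simp only [mem_filter, mem_univ, true_and, and_iff_right_iff_imp]
    intro hx
    rw [← (mem_filter.mp hx₀).2, ← Nat.card_zpowers, hx, Nat.card_zpowers]
  rw [fiber, ← Fintype.card_subtype, ← Nat.card_eq_fintype_card,
    card_zpowers_eq_zpowers_eq_totient, (mem_filter.mp hx₀).2]

theorem card_pow_prime_pow_succ_eq_one [Finite G] {p : ℕ} (hp : p.Prime) (a : ℕ) :
    Nat.card {x : G // x ^ p ^ (a + 1) = 1} =
      Nat.card {x : G // x ^ p ^ a = 1} + Nat.card {x : G // orderOf x = p ^ (a + 1)} := by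
  classical
  have h_or (x : G) : x ^ p ^ (a + 1) = 1 ↔ x ^ p ^ a = 1 ∨ orderOf x = p ^ (a + 1) := by
    simp only [← orderOf_dvd_iff_pow_eq_one, Nat.dvd_prime_pow hp]
    constructor
    · rintro ⟨c, hc, hx⟩
      rcases hc.lt_or_eq with hc | rfl
      exacts [Or.inl ⟨c, by omega, hx⟩, Or.inr hx]
    · rintro (⟨c, hc, hx⟩ | hx)
      exacts [⟨c, by omega, hx⟩, ⟨a + 1, le_rfl, hx⟩]
  have h_disj : Disjoint (fun x : G => x ^ p ^ a = 1) (orderOf · = p ^ (a + 1)) := by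
    rw [Pi.disjoint_iff]
    intro x
    simp only [Prop.disjoint_iff, ← orderOf_dvd_iff_pow_eq_one]
    rintro ⟨hx, hx'⟩
    rw [hx', Nat.pow_dvd_pow_iff_le_right hp.one_lt] at hx
    omega
  rw [← Nat.card_sum, ← Nat.card_congr (subtypeOrEquiv _ _ h_disj)]
  exact Nat.card_congr (Equiv.subtypeEquivRight h_or)

theorem pow_dvd_card_pow_eq_one_of_succ [Finite G] {p a : ℕ} (hp : p.Prime)
    (h : p ^ (a + 1) ∣ Nat.card {x : G // x ^ p ^ (a + 1) = 1}) :
    p ^ a ∣ Nat.card {x : G // x ^ p ^ a = 1} := by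
  rw [card_pow_prime_pow_succ_eq_one hp] at h
  have h_order : p ^ a ∣ Nat.card {x : G // orderOf x = p ^ (a + 1)} :=
    (Nat.totient_prime_pow_succ hp a ▸ dvd_mul_right _ _).trans (totient_dvd_card_orderOf_eq _)
  exact (Nat.dvd_add_left h_order).mp ((pow_dvd_pow p a.le_succ).trans h)

theorem pow_dvd_card_pow_eq_one_of_le [Finite G] {p a b : ℕ} (hp : p.Prime) (hab : a ≤ b)
    (h : p ^ b ∣ Nat.card {x : G // x ^ p ^ b = 1}) :
    p ^ a ∣ Nat.card {x : G // x ^ p ^ a = 1} :=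
  Nat.decreasingInduction (motive := fun c _ => p ^ c ∣ Nat.card {x : G // x ^ p ^ c = 1})
    (fun _ _ => pow_dvd_card_pow_eq_one_of_succ hp) h hab

theorem not_dvd_card_pow_eq_one_of_isMulCommutative {A : Type*} [Group A] [IsMulCommutative A]
    [Finite A] {p m : ℕ} (hp : p.Prime) (hpm : ¬ p ∣ m) : ¬ p ∣ Nat.card {z : A // z ^ m = 1} := by
  let : CommGroup A := { mul_comm := mul_comm' }
  intro h
  have : Fact p.Prime := ⟨hp⟩
  obtain ⟨z, hz⟩ := exists_prime_orderOf_dvd_card' (G := (powMonoidHom m : A →* A).ker) p h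
  exact hpm (hz ▸ orderOf_dvd_of_pow_eq_one (Subtype.ext z.2))

theorem ordProj_dvd_card_pow_ordProj_eq_one [Finite G] {p : ℕ} (hp : p.Prime)
    (hC : ∀ y ∉ center G, ∀ a, p ^ a ∣ Nat.card (centralizer {y}) →
      p ^ a ∣ Nat.card {u : centralizer {y} // u ^ p ^ a = 1}) :
    ordProj[p] (Nat.card G) ∣ Nat.card {x : G // x ^ ordProj[p] (Nat.card G) = 1} := by
  classical
  have : Fintype G := Fintype.ofFinite G
  set q := ordProj[p] (Nat.card G)
  set m := ordCompl[p] (Nat.card G)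
  have hsum := card_pow_mul_eq_one_eq_sum (G := G)
    ((Nat.coprime_ordCompl hp Nat.card_pos.ne').pow_left _ : q.Coprime m)
  rw [Nat.ordProj_mul_ordCompl_eq_self,
    Nat.card_congr (Equiv.subtypeUnivEquiv fun _ => pow_card_eq_one'),
    ← sum_filter_add_sum_filter_not _ (· ∈ center G), filter_filter, filter_filter,
    sum_congr rfl fun y hy => card_centralizer_pow_eq_one_of_mem_center (mem_filter.mp hy).2.2 q,
    sum_const, smul_eq_mul] at hsum
  have noncentral : q ∣ ∑ y ∈ {y : G | y ^ m = 1 ∧ y ∉ center G},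
      Nat.card {u : centralizer {y} // u ^ q = 1} := by
    refine dvd_sum_filter_of_dvd_index_centralizer_mul (fun g y => ?_)
      (fun g y => card_centralizer_map_pow_eq_one _ y q)
      fun y hy => pow_dvd_index_mul_card_pow_eq_one hp (Nat.ordProj_dvd _ _) (hC y hy.2)
    rw [← map_pow, MulEquiv.map_eq_one_iff, Characteristic.map_mem_iff]
  have coprime_central : q.Coprime #{y : G | y ^ m = 1 ∧ y ∈ center G} := by
    refine Nat.Coprime.pow_left _ ((hp.coprime_iff_not_dvd).mpr ?_)
    rw [← Fintype.card_subtype, ← Nat.card_eq_fintype_card,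
      Nat.card_congr (Equiv.subtypeEquivRight fun _ => and_comm), ← card_pow_eq_one_eq_card_mem]
    exact not_dvd_card_pow_eq_one_of_isMulCommutative hp
      (Nat.not_dvd_ordCompl hp (Nat.card_pos (α := G)).ne')
  exact coprime_central.dvd_of_dvd_mul_left
    ((Nat.dvd_add_left noncentral).mp (hsum ▸ Nat.ordProj_dvd _ _))

theorem prime_pow_dvd_card_pow_eq_one {p : ℕ} (hp : p.Prime) (G : Type*) [Group G] [Finite G]
    {a : ℕ} (ha : p ^ a ∣ Nat.card G) : p ^ a ∣ Nat.card {x : G // x ^ p ^ a = 1} := by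
  induction hn : Nat.card G using Nat.strong_induction_on generalizing G a with
  | _ n ih =>
    have full := ordProj_dvd_card_pow_ordProj_eq_one (G := G) hp fun y hy _ hb =>
      ih _ (hn ▸ card_centralizer_lt_of_notMem_center hy) _ hb rfl
    exact pow_dvd_card_pow_eq_one_of_le hp
      ((hp.pow_dvd_iff_le_factorization Nat.card_pos.ne').mp ha) full

theorem ordProj_dvd_card_pow_eq_one [Finite G] {p k : ℕ} (hp : p.Prime) (hk : k ∣ Nat.card G)
    (hk0 : k ≠ 0) : ordProj[p] k ∣ Nat.card {x : G // x ^ k = 1} := by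
  classical
  have : Fintype G := Fintype.ofFinite G
  have hsum := card_pow_mul_eq_one_eq_sum (G := G)
    ((Nat.coprime_ordCompl hp hk0).pow_left _ : (ordProj[p] k).Coprime (ordCompl[p] k))
  rw [Nat.ordProj_mul_ordCompl_eq_self] at hsum
  rw [hsum]
  refine dvd_sum_filter_of_dvd_index_centralizer_mul (fun g y => ?_)
    (fun g y => card_centralizer_map_pow_eq_one _ y _)
    fun y _ => pow_dvd_index_mul_card_pow_eq_one hp ((Nat.ordProj_dvd k p).trans hk)
      fun _ => prime_pow_dvd_card_pow_eq_one hp _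
  rw [← map_pow, MulEquiv.map_eq_one_iff]

end

theorem frobenius_divisibility_general (G : Type*) [Group G] [Finite G]
    (k : ℕ) (hdvd : k ∣ Nat.card G) :
    k ∣ Nat.card {x : G // x ^ k = 1} := by
  have hk0 : k ≠ 0 := ne_zero_of_dvd_ne_zero Nat.card_pos.ne' hdvd
  refine (Nat.dvd_iff_prime_pow_dvd_dvd _ k).mpr fun p j hp hj => ?_
  exact ((hp.pow_dvd_iff_dvd_ordProj hk0).mp hj).trans (ordProj_dvd_card_pow_eq_one hp hdvd hk0)

/-- Frobenius' theorem: for any finite group `G` and any divisor `k` of `|G|`,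
the number of solutions of `x ^ k = 1` in `G` is divisible by `k`. -/
theorem frobenius_divisibility (G : Type*) [Group G] [Finite G]
    (k : ℕ) (hk : 0 < k) (hdvd : k ∣ Nat.card G) :
    k ∣ Nat.card {x : G // x ^ k = 1} :=
  frobenius_divisibility_general G k hdvd
end

section
/- The alternating group A₅ ≅ PSL(2,4) has global breadth 8, and satisfies |A₅| = 60 ≤ B(A₅)·(B(A₅)+1) = 72. -/
/-- The global breadth of a finite group: the maximum over divisors `k` of
`|G|` of `|{x : x ^ k = 1}| / k`. -/
noncomputable def globalBreadth (G : Type*) [Group G] : ℕ :=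
  (Nat.card G).divisors.sup fun k => Nat.card {x : G // x ^ k = 1} / k

set_option maxRecDepth 8000

private lemma A5card : Nat.card (alternatingGroup (Fin 5)) = 60 := by
  rw [Nat.card_eq_fintype_card]; decide

private lemma cnt1 : Nat.card {x : alternatingGroup (Fin 5) // x ^ 1 = 1} = 1 := by
  rw [Nat.card_eq_fintype_card]; decide

private lemma cnt2 : Nat.card {x : alternatingGroup (Fin 5) // x ^ 2 = 1} = 16 := by
  rw [Nat.card_eq_fintype_card]; decide

private lemma cnt3 : Nat.card {x : alternatingGroup (Fin 5) // x ^ 3 = 1} = 21 := by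
  rw [Nat.card_eq_fintype_card]; decide

private lemma cnt4 : Nat.card {x : alternatingGroup (Fin 5) // x ^ 4 = 1} = 16 := by
  rw [Nat.card_eq_fintype_card]; decide

private lemma cnt5 : Nat.card {x : alternatingGroup (Fin 5) // x ^ 5 = 1} = 25 := by
  rw [Nat.card_eq_fintype_card]; decide

private lemma cnt6 : Nat.card {x : alternatingGroup (Fin 5) // x ^ 6 = 1} = 36 := by
  rw [Nat.card_eq_fintype_card]; decide

private lemma cnt_le (k : ℕ) : Nat.card {x : alternatingGroup (Fin 5) // x ^ k = 1} ≤ 60 := by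
  rw [Nat.card_eq_fintype_card]
  calc Fintype.card {x : alternatingGroup (Fin 5) // x ^ k = 1}
      ≤ Fintype.card (alternatingGroup (Fin 5)) := Fintype.card_subtype_le _
    _ = 60 := by decide

private lemma breadth8 : globalBreadth (alternatingGroup (Fin 5)) = 8 := by
  unfold globalBreadth
  rw [A5card]
  apply le_antisymm
  · apply Finset.sup_le
    intro k hk
    have hdiv : (60 : ℕ).divisors = {1, 2, 3, 4, 5, 6, 10, 12, 15, 20, 30, 60} := by decide
    rw [hdiv] at hk
    fin_cases hk
    · rw [cnt1]; norm_num
    · rw [cnt2]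
    · rw [cnt3]; norm_num
    · rw [cnt4]; norm_num
    · rw [cnt5]; norm_num
    · rw [cnt6]; norm_num
    all_goals
      exact le_trans (Nat.div_le_div_right (cnt_le _)) (by norm_num)
  · have h2 : (2 : ℕ) ∈ (60 : ℕ).divisors := by decide
    refine le_trans (le_of_eq ?_) (Finset.le_sup h2)
    show (8 : ℕ) = Nat.card {x : alternatingGroup (Fin 5) // x ^ 2 = 1} / 2
    rw [cnt2]

/-- `A₅ ≅ PSL(2,4)` has global breadth `8` and `|A₅| = 60 ≤ 8·9 = 72`. -/
theorem alternatingGroup_five_breadth :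
    globalBreadth (alternatingGroup (Fin 5)) = 8 ∧
      Nat.card (alternatingGroup (Fin 5)) = 60 ∧
      Nat.card (alternatingGroup (Fin 5)) ≤
        globalBreadth (alternatingGroup (Fin 5)) *
          (globalBreadth (alternatingGroup (Fin 5)) + 1) := by
  refine ⟨breadth8, A5card, ?_⟩
  rw [breadth8, A5card]
  norm_num
end

section
/- For m ≥ 2 and q = 2^m, the number of solutions of x² = 1 in PSL(2,q) equals q² = 2^{2m}; consequently b_2(PSL(2,2^m)) = 2^{2m−1}. -/
/-!
In characteristic two the centre of `SL(2, F)` is trivial (`r ^ 2 = 1` forces `r = 1`), so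
`PSL(2, F) = SL(2, F)`. By Cayley–Hamilton `A ^ 2 = trace A • A - 1` for `A ∈ SL(2, F)`, so
`A` is an involution exactly when `trace A • A = 0`, i.e. when `trace A = 0`. Such matrices
are `!![a, b; c, -a]` with `b * c = a ^ 2 + 1 = (a + 1) ^ 2`: for `a ≠ 1` the pair `(b, c)` is
determined by `b ≠ 0`, while for `a = 1` it is `(0, c)` or `(c, 0)`. This gives
`(q - 1) ^ 2 + (2 q - 1) = q ^ 2` solutions.
-/

open scoped MatrixGroups
open Matrix

theorem Matrix.mul_self_fin_two {R : Type*} [CommRing R] (M : Matrix (Fin 2) (Fin 2) R) :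
    M * M = M.trace • M - M.det • 1 := by
  ext i j
  fin_cases i <;> fin_cases j <;>
    simp [mul_apply, trace_fin_two, det_fin_two, Fin.sum_univ_two] <;> ring

theorem MulEquiv.natCard_pow_eq_one {G H : Type*} [Monoid G] [Monoid H] (e : G ≃* H) (n : ℕ) :
    Nat.card {x : G // x ^ n = 1} = Nat.card {y : H // y ^ n = 1} :=
  Nat.card_congr <| e.toEquiv.subtypeEquiv fun x => by
    rw [MulEquiv.toEquiv_eq_coe, MulEquiv.coe_toEquiv, ← map_pow, ← map_one e,
      e.apply_eq_iff_eq]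

def equivProdOfUniqueRoot {K : Type*} [Field K] [DecidableEq K] (g : K → K) (a₀ : K)
    (hg : ∀ a, g a = 0 ↔ a = a₀) :
    {v : K × K × K // v.2.1 * v.2.2 = g v.1} ≃ K × K where
  toFun v := if v.1.2.1 = 0 then (v.1.2.2, 0) else (v.1.1, v.1.2.1)
  invFun p :=
    if hp : p.2 = 0 then ⟨(a₀, 0, p.1), by simp [(hg a₀).2 rfl]⟩
    else ⟨(p.1, p.2, g p.1 / p.2), mul_div_cancel₀ _ hp⟩
  left_inv := by
    rintro ⟨⟨a, b, c⟩, hv⟩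
    by_cases hb : b = 0
    · subst hb
      have ha : a = a₀ := (hg a).1 (by simpa using hv.symm)
      simp [ha]
    · have hc : g a / b = c := by rw [← hv, mul_div_cancel_left₀ _ hb]
      simp [hb, hc]
  right_inv := by
    rintro ⟨x, y⟩
    by_cases hy : y = 0 <;> simp [hy]

theorem Matrix.mul_self_eq_one_iff_trace_eq_zero_of_det_eq_one {R : Type*} [CommRing R]
    [CharP R 2] {M : Matrix (Fin 2) (Fin 2) R} (hM : M.det = 1) : M * M = 1 ↔ M.trace = 0 := by
  rw [mul_self_fin_two, hM, one_smul, sub_eq_iff_eq_add, CharTwo.add_self_eq_zero]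
  refine ⟨fun h => ?_, fun h => by rw [h, zero_smul]⟩
  have entry (i j : Fin 2) : M.trace * M i j = 0 := by simpa using congr_fun (congr_fun h i) j
  calc M.trace = M.trace * M.det := by rw [hM, mul_one]
    _ = (M.trace * M 0 0) * M 1 1 - (M.trace * M 0 1) * M 1 0 := by rw [det_fin_two]; ring
    _ = 0 := by simp [entry]

namespace Matrix.SpecialLinearGroup

def traceZeroEquiv (R : Type*) [CommRing R] :
    {A : SL(2, R) // trace (A : Matrix (Fin 2) (Fin 2) R) = 0} ≃
      {v : R × R × R // v.2.1 * v.2.2 = -v.1 ^ 2 - 1} where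
  toFun A := ⟨(A.1 0 0, A.1 0 1, A.1 1 0), by
    have hd : A.1 1 1 = -A.1 0 0 := eq_neg_of_add_eq_zero_right (by simpa [trace_fin_two] using A.2)
    have hdet : A.1 0 0 * A.1 1 1 - A.1 0 1 * A.1 1 0 = 1 := by rw [← det_fin_two]; exact A.1.2
    rw [hd] at hdet
    linear_combination -hdet⟩
  invFun v := ⟨⟨!![v.1.1, v.1.2.1; v.1.2.2, -v.1.1], by
    rw [det_fin_two_of]; linear_combination -v.2⟩, by simp [trace_fin_two]⟩
  left_inv A := by
    have hd : A.1 1 1 = -A.1 0 0 := eq_neg_of_add_eq_zero_right (by simpa [trace_fin_two] using A.2)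
    ext i j
    fin_cases i <;> fin_cases j <;> simp [hd]
  right_inv v := rfl

variable {R : Type*} [CommRing R] [CharP R 2]

theorem sq_eq_one_iff_trace_eq_zero (A : SL(2, R)) :
    A ^ 2 = 1 ↔ trace (A : Matrix (Fin 2) (Fin 2) R) = 0 := by
  rw [← mul_self_eq_one_iff_trace_eq_zero_of_det_eq_one A.2, ← coe_mul, ← coe_one, ← sq]
  exact ⟨congrArg _, Subtype.ext⟩

theorem center_eq_bot_of_charTwo [NoZeroDivisors R] : Subgroup.center SL(2, R) = ⊥ := by
  refine (Subgroup.eq_bot_iff_forall _).2 fun A hA => ?_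
  obtain ⟨r, hr, hrA⟩ := mem_center_iff.1 hA
  have hr1 : r = 1 := CharTwo.sq_inj.1 (by simpa using hr)
  ext i j
  simp [← hrA, hr1, one_apply]

theorem card_sq_eq_one (F : Type*) [Field F] [Fintype F] [CharP F 2] :
    Nat.card {A : SL(2, F) // A ^ 2 = 1} = Fintype.card F ^ 2 := by
  classical
  have root_iff (a : F) : -a ^ 2 - 1 = 0 ↔ a = 1 := by
    rw [CharTwo.neg_eq, CharTwo.sub_eq_add, CharTwo.add_eq_zero, ← CharTwo.sq_inj (x := a),
      one_pow]
  calc Nat.card {A : SL(2, F) // A ^ 2 = 1}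
      = Nat.card {A : SL(2, F) // trace (A : Matrix (Fin 2) (Fin 2) F) = 0} :=
        Nat.card_congr (Equiv.subtypeEquivRight sq_eq_one_iff_trace_eq_zero)
    _ = Nat.card (F × F) :=
        Nat.card_congr ((traceZeroEquiv F).trans (equivProdOfUniqueRoot _ 1 root_iff))
    _ = Fintype.card F ^ 2 := by rw [Nat.card_eq_fintype_card, Fintype.card_prod, sq]

end Matrix.SpecialLinearGroup

/-- For `q = 2^m`, `m ≥ 2`, the number of solutions of `x² = 1` in `PSL(2,q)`
equals `q² = 2^{2m}`; consequently `b₂(PSL(2,2^m)) = 2^{2m−1}`. -/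
theorem card_involutions_PSL_two_char_two (m : ℕ) (hm : 2 ≤ m)
    (F : Type*) [Field F] [Fintype F] (hF : Fintype.card F = 2 ^ m) :
    Nat.card {x : PSL(2, F) // x ^ 2 = 1} = 2 ^ (2 * m) ∧
      Nat.card {x : PSL(2, F) // x ^ 2 = 1} / 2 = 2 ^ (2 * m - 1) := by
  have : CharP F 2 := charP_of_card_eq_prime_pow hF
  let e : PSL(2, F) ≃* SL(2, F) :=
    (QuotientGroup.quotientMulEquivOfEq SpecialLinearGroup.center_eq_bot_of_charTwo).trans
      QuotientGroup.quotientBot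
  have hcard : Nat.card {x : PSL(2, F) // x ^ 2 = 1} = 2 ^ (2 * m) := by
    rw [e.natCard_pow_eq_one, SpecialLinearGroup.card_sq_eq_one, hF, ← pow_mul, mul_comm]
  refine ⟨hcard, ?_⟩
  rw [hcard, show 2 * m = (2 * m - 1) + 1 by omega, pow_succ, Nat.mul_div_cancel _ two_pos,
    Nat.add_sub_cancel]
end
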